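/- There exists a binary linear code C ⊆ F_2^5 satisfying C^{⋆2} = C + C^⊥ that is not triorthogonal. Specifically, the code C spanned by (1,1,0,0,0), (0,1,1,0,0), (0,0,0,1,1) satisfies C^{⋆2} = C + C^⊥, but C admits no triorthogonal generator matrix. -/

import Mathlib

open Matrix

/-- A binary matrix is triorthogonal if every Schur (coordinatewise) product of two
distinct rows and of three pairwise distinct rows has even Hamming weight. -/
def Triorthogonal {m n : ℕ} (G : Matrix (Fin m) (Fin n) (ZMod 2)) : Prop :=
  (∀ i j : Fin m, i ≠ j → Even (hammingNorm (G i * G j))) ∧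
  (∀ i j k : Fin m, i ≠ j → i ≠ k → j ≠ k → Even (hammingNorm (G i * G j * G k)))

/-- The Schur square `C^{⋆2}` of a binary linear code. -/
def schurSquare {n : ℕ} (C : Submodule (ZMod 2) (Fin n → ZMod 2)) :
    Submodule (ZMod 2) (Fin n → ZMod 2) :=
  Submodule.span (ZMod 2) {x | ∃ c ∈ C, ∃ c' ∈ C, x = c * c'}

/-- The dual code `C^⊥`. -/
def dualCode {n : ℕ} (C : Submodule (ZMod 2) (Fin n → ZMod 2)) :
    Submodule (ZMod 2) (Fin n → ZMod 2) where
  carrier := {u | ∀ c ∈ C, dotProduct u c = 0}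
  add_mem' := by
    intro a b ha hb c hc
    simp [add_dotProduct, ha c hc, hb c hc]
  zero_mem' := by
    intro c hc
    simp
  smul_mem' := by
    intro r a ha c hc
    simp [smul_dotProduct, ha c hc]

/-- A binary code is triorthogonal if it has a triorthogonal generator matrix
(whose number of rows equals the dimension of the code). -/
def IsTriorthogonalCode {n : ℕ} (C : Submodule (ZMod 2) (Fin n → ZMod 2)) : Prop :=
  ∃ (m : ℕ) (G : Matrix (Fin m) (Fin n) (ZMod 2)), Triorthogonal G ∧
    Submodule.span (ZMod 2) (Set.range fun i => G i) = C ∧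
    m = Module.finrank (ZMod 2) C

/-!
The Schur square of `C = ⟨11000, 01100, 00011⟩` is spanned by the generators and their only
new product `11000 * 01100 = 01000`, while `C^⊥ = ⟨11100, 00011⟩`; as
`11100 = 11000 + 01100 + 01000`, both sides equal `⟨11000, 01100, 00011, 01000⟩`.

Over `𝔽₂` the parity of the weight of `u * v` is `u ⬝ᵥ v`, and `v ⬝ᵥ v = 1 ⬝ᵥ v`. So in an even code
the pair condition of a triorthogonal generator matrix makes its Gram matrix vanish, i.e. the code
is self-orthogonal; but `11000 ⬝ᵥ 01100 = 1`.
-/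

open scoped Pointwise

lemma ZMod.mul_self_eq_self (x : ZMod 2) : x * x = x := by
  simpa [sq] using ZMod.pow_card x

section BinaryCode

variable {n : ℕ}

lemma dotProduct_eq_hammingNorm_mul (u v : Fin n → ZMod 2) :
    u ⬝ᵥ v = (hammingNorm (u * v) : ZMod 2) := by
  rw [hammingNorm, Finset.card_filter, Nat.cast_sum, dotProduct]
  refine Finset.sum_congr rfl fun i _ => ?_
  rw [Pi.mul_apply]
  generalize u i * v i = t
  fin_cases t <;> rfl

lemma dotProduct_self_eq_one_dotProduct (v : Fin n → ZMod 2) : v ⬝ᵥ v = 1 ⬝ᵥ v := by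
  simp only [dotProduct, ZMod.mul_self_eq_self, Pi.one_apply, one_mul]

lemma mem_dualCode_span_iff {s : Set (Fin n → ZMod 2)} {u : Fin n → ZMod 2} :
    u ∈ dualCode (Submodule.span (ZMod 2) s) ↔ ∀ x ∈ s, u ⬝ᵥ x = 0 := by
  refine ⟨fun h x hx => h x (Submodule.subset_span hx), fun h c hc => ?_⟩
  induction hc using Submodule.span_induction with
  | mem x hx => exact h x hx
  | zero => exact dotProduct_zero u
  | add x y _ _ hx hy => rw [dotProduct_add, hx, hy, add_zero]
  | smul r x _ hx => rw [dotProduct_smul, hx, smul_zero]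

lemma span_le_dualCode_span_iff {s : Set (Fin n → ZMod 2)} :
    Submodule.span (ZMod 2) s ≤ dualCode (Submodule.span (ZMod 2) s) ↔
      ∀ x ∈ s, ∀ y ∈ s, x ⬝ᵥ y = 0 := by
  rw [Submodule.span_le]
  exact forall₂_congr fun x _ => mem_dualCode_span_iff

lemma schurSquare_eq_mul (C : Submodule (ZMod 2) (Fin n → ZMod 2)) : schurSquare C = C * C := by
  rw [Submodule.mul_eq_span_mul_set, schurSquare]
  congr 1
  ext x
  simp [Set.mem_mul, eq_comm]

lemma schurSquare_span (s : Set (Fin n → ZMod 2)) :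
    schurSquare (Submodule.span (ZMod 2) s) = Submodule.span (ZMod 2) (s * s) := by
  rw [schurSquare_eq_mul, Submodule.span_mul_span]

lemma Triorthogonal.span_le_dualCode {m : ℕ} {G : Matrix (Fin m) (Fin n) (ZMod 2)}
    (hG : Triorthogonal G) (hself : ∀ i, G i ⬝ᵥ G i = 0) :
    Submodule.span (ZMod 2) (Set.range fun i => G i) ≤
      dualCode (Submodule.span (ZMod 2) (Set.range fun i => G i)) := by
  rw [span_le_dualCode_span_iff]
  rintro _ ⟨i, rfl⟩ _ ⟨j, rfl⟩
  obtain rfl | hij := eq_or_ne i j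
  · exact hself i
  · rw [dotProduct_eq_hammingNorm_mul, (ZMod.natCast_eq_zero_iff_even).2 (hG.1 i j hij)]

lemma IsTriorthogonalCode.le_dualCode {C : Submodule (ZMod 2) (Fin n → ZMod 2)}
    (hC : IsTriorthogonalCode C) (heven : 1 ∈ dualCode C) : C ≤ dualCode C := by
  obtain ⟨m, G, hG, rfl, -⟩ := hC
  refine hG.span_le_dualCode fun i => ?_
  rw [dotProduct_self_eq_one_dotProduct]
  exact heven _ (Submodule.subset_span ⟨i, rfl⟩)

end BinaryCode

section ExampleCode

def exampleCode : Submodule (ZMod 2) (Fin 5 → ZMod 2) :=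
  Submodule.span (ZMod 2) {![1,1,0,0,0], ![0,1,1,0,0], ![0,0,0,1,1]}

lemma one_mem_dualCode_exampleCode : 1 ∈ dualCode exampleCode := by
  simp only [exampleCode, mem_dualCode_span_iff, Set.mem_insert_iff, Set.mem_singleton_iff,
    forall_eq_or_imp, forall_eq]
  decide

lemma not_isTriorthogonalCode_exampleCode : ¬ IsTriorthogonalCode exampleCode := by
  intro h
  have hab := h.le_dualCode one_mem_dualCode_exampleCode
    (Submodule.subset_span (by simp) : ![1,1,0,0,0] ∈ exampleCode) ![0,1,1,0,0]
    (Submodule.subset_span (by simp))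
  exact absurd hab (by decide)

lemma dualCode_exampleCode :
    dualCode exampleCode = Submodule.span (ZMod 2) {![1,1,1,0,0], ![0,0,0,1,1]} := by
  have hcoords : ∀ u : Fin 5 → ZMod 2, u ⬝ᵥ ![1,1,0,0,0] = 0 → u ⬝ᵥ ![0,1,1,0,0] = 0 →
      u ⬝ᵥ ![0,0,0,1,1] = 0 → u = u 0 • ![1,1,1,0,0] + u 3 • ![0,0,0,1,1] := by
    decide
  refine le_antisymm (fun u hu => ?_) (Submodule.span_le.2 ?_)
  · simp only [exampleCode, mem_dualCode_span_iff, Set.mem_insert_iff, Set.mem_singleton_iff,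
      forall_eq_or_imp, forall_eq] at hu
    rw [hcoords u hu.1 hu.2.1 hu.2.2]
    exact add_mem (Submodule.smul_mem _ _ (Submodule.subset_span (by simp)))
      (Submodule.smul_mem _ _ (Submodule.subset_span (by simp)))
  · simp only [exampleCode, Set.insert_subset_iff, Set.singleton_subset_iff, SetLike.mem_coe,
      mem_dualCode_span_iff, Set.mem_insert_iff, Set.mem_singleton_iff, forall_eq_or_imp,
      forall_eq]
    decide

lemma schurSquare_exampleCode :
    schurSquare exampleCode =
      Submodule.span (ZMod 2) {![1,1,0,0,0], ![0,1,1,0,0], ![0,0,0,1,1], ![0,1,0,0,0]} := by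
  have hprod : ({![1,1,0,0,0], ![0,1,1,0,0], ![0,0,0,1,1]} : Set (Fin 5 → ZMod 2)) *
      {![1,1,0,0,0], ![0,1,1,0,0], ![0,0,0,1,1]} =
      {0, ![1,1,0,0,0], ![0,1,1,0,0], ![0,0,0,1,1], ![0,1,0,0,0]} := by
    have hfin : ({![1,1,0,0,0], ![0,1,1,0,0], ![0,0,0,1,1]} : Finset (Fin 5 → ZMod 2)) *
        {![1,1,0,0,0], ![0,1,1,0,0], ![0,0,0,1,1]} =
        {0, ![1,1,0,0,0], ![0,1,1,0,0], ![0,0,0,1,1], ![0,1,0,0,0]} := by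
      decide
    simpa using congrArg ((↑) : Finset (Fin 5 → ZMod 2) → Set (Fin 5 → ZMod 2)) hfin
  rw [exampleCode, schurSquare_span, hprod, Submodule.span_insert_zero]

lemma exampleCode_sup_dualCode :
    exampleCode ⊔ dualCode exampleCode =
      Submodule.span (ZMod 2) {![1,1,0,0,0], ![0,1,1,0,0], ![0,0,0,1,1], ![0,1,0,0,0]} := by
  rw [dualCode_exampleCode, exampleCode, ← Submodule.span_union]
  apply Submodule.span_eq_span
  · have hd : (![1,1,1,0,0] : Fin 5 → ZMod 2) = ![1,1,0,0,0] + ![0,1,1,0,0] + ![0,1,0,0,0] := by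
      decide
    simp only [Set.union_subset_iff, Set.insert_subset_iff, Set.singleton_subset_iff,
      SetLike.mem_coe]
    refine ⟨⟨Submodule.subset_span (by simp), Submodule.subset_span (by simp),
      Submodule.subset_span (by simp)⟩, ?_, Submodule.subset_span (by simp)⟩
    rw [hd]
    exact add_mem (add_mem (Submodule.subset_span (by simp)) (Submodule.subset_span (by simp)))
      (Submodule.subset_span (by simp))
  · have hab : (![0,1,0,0,0] : Fin 5 → ZMod 2) = ![1,1,0,0,0] + ![0,1,1,0,0] + ![1,1,1,0,0] := by
      decide
    simp only [Set.insert_subset_iff, Set.singleton_subset_iff, SetLike.mem_coe]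
    refine ⟨Submodule.subset_span (by simp), Submodule.subset_span (by simp),
      Submodule.subset_span (by simp), ?_⟩
    rw [hab]
    exact add_mem (add_mem (Submodule.subset_span (by simp)) (Submodule.subset_span (by simp)))
      (Submodule.subset_span (by simp))

end ExampleCode

theorem stmt5 :
    let C : Submodule (ZMod 2) (Fin 5 → ZMod 2) :=
      Submodule.span (ZMod 2)
        {![1,1,0,0,0], ![0,1,1,0,0], ![0,0,0,1,1]}
    schurSquare C = C ⊔ dualCode C ∧ ¬ IsTriorthogonalCode C :=
  ⟨schurSquare_exampleCode.trans exampleCode_sup_dualCode.symm,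
    not_isTriorthogonalCode_exampleCode⟩
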